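/- arXiv:2408.13840 — 3 statements merged into one kernel-verified Lean document; each statement's English description precedes it below -/
import Mathlib

section
/- Let B be a finite nonempty set and φ : B × B → Prop a binary predicate. Suppose that universal quantification over B commutes with binary disjunction, in the sense that for all predicates ψ₁, ψ₂ : B → Prop, (∀ x, ψ₁(x) ∨ ψ₂(x)) implies (∀ x, ψ₁(x)) ∨ (∀ x, ψ₂(x)). Then (∀ x ∈ B, ∃ y ∈ B, φ(x, y)) implies (∃ y ∈ B, ∀ x ∈ B, φ(x, y)). -/
/-- If universal quantification over a finite nonempty `B` commutes with binary disjunction,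
then `∀x ∃y, φ x y` implies `∃y ∀x, φ x y`. -/
theorem stmt_3 (B : Type*) [Fintype B] [Nonempty B] (φ : B → B → Prop)
    (hcomm : ∀ ψ₁ ψ₂ : B → Prop, (∀ x, ψ₁ x ∨ ψ₂ x) → (∀ x, ψ₁ x) ∨ (∀ x, ψ₂ x)) :
    (∀ x : B, ∃ y : B, φ x y) → ∃ y : B, ∀ x : B, φ x y := by
  intro h
  have key : ∀ s : Finset B, (∀ x, ∃ y ∈ s, φ x y) → ∃ y ∈ s, ∀ x, φ x y := by
    intro s
    classical
    induction s using Finset.induction_on with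
    | empty => intro hs; obtain ⟨x⟩ := ‹Nonempty B›; obtain ⟨y, hy, _⟩ := hs x; simp at hy
    | @insert a s ha ih =>
      intro hs
      have := hcomm (fun x => φ x a) (fun x => ∃ y ∈ s, φ x y) (fun x => by
        obtain ⟨y, hy, hxy⟩ := hs x
        rcases Finset.mem_insert.mp hy with rfl | hy
        · exact Or.inl hxy
        · exact Or.inr ⟨y, hy, hxy⟩)
      rcases this with h1 | h2
      · exact ⟨a, Finset.mem_insert_self a s, h1⟩
      · obtain ⟨y, hy, hall⟩ := ih h2
        exact ⟨y, Finset.mem_insert_of_mem hy, hall⟩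
  obtain ⟨y, _, hall⟩ := key Finset.univ (fun x => by
    obtain ⟨y, hy⟩ := h x; exact ⟨y, Finset.mem_univ y, hy⟩)
  exact ⟨y, hall⟩
end

section
/- Let Q be an infinite set, n ≥ 2, and let φ ⊆ Qⁿ be invariant under all permutations of Q. Suppose the constant tuple (x, x, …, x) lies in φ for some (equivalently, every) x ∈ Q, but φ ≠ Qⁿ. Then there is a coarsest identification of variables making φ false, given by some r ≥ 2 and a surjective map c : {1,…,n} → {1,…,r}, such that the relation R(u₁,…,u_r) := ((u_{c(1)}, …, u_{c(n)}) ∈ φ) is defined by the disjunction ⋁_{i≠j} (uᵢ = u_j), i.e. (u₁,…,u_r) ∈ R if and only if uᵢ = u_j for some i ≠ j. -/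
open Finset in
/-- Factor any tuple through its image: `v = u ∘ c` with `c` surjective, `u` injective,
and the number of classes equal to the image cardinality. -/
lemma stmt_11_factor {Q : Type*} [DecidableEq Q] {n : ℕ} (v : Fin n → Q) :
    ∃ (c : Fin n → Fin (Finset.univ.image v).card)
      (u : Fin (Finset.univ.image v).card → Q),
      Function.Surjective c ∧ Function.Injective u ∧ u ∘ c = v := by
  set s := Finset.univ.image v with hs
  have hmem : ∀ i, v i ∈ s := fun i => Finset.mem_image_of_mem v (Finset.mem_univ i)
  let e : s ≃ Fin s.card := s.equivFin
  refine ⟨fun i => e ⟨v i, hmem i⟩, fun j => (e.symm j : Q), ?_, ?_, ?_⟩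
  · intro j
    obtain ⟨i, -, hi⟩ := Finset.mem_image.mp (e.symm j).2
    refine ⟨i, ?_⟩
    have h2 : (⟨v i, hmem i⟩ : s) = e.symm j := Subtype.ext hi
    show e ⟨v i, hmem i⟩ = j
    rw [h2, Equiv.apply_symm_apply]
  · intro a b hab
    exact e.symm.injective (Subtype.coe_injective hab)
  · funext i
    simp

/-- Extend an assignment between two injective tuples on an infinite type to a permutation. -/
lemma stmt_11_perm {Q : Type*} [Infinite Q] {r : ℕ} {u₀ u : Fin r → Q}
    (h₀ : Function.Injective u₀) (h : Function.Injective u) :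
    ∃ σ : Equiv.Perm Q, ∀ j, σ (u₀ j) = u j := by
  classical
  let e : Set.range u₀ ≃ Fin r := (Equiv.ofInjective u₀ h₀).symm
  let f : Set.range u₀ ↪ Q := ⟨fun x => u (e x), fun a b hab => e.injective (h hab)⟩
  have hs : Cardinal.mk (Set.range u₀) < Cardinal.mk Q := by
    have : Finite (Set.range u₀) := Finite.Set.finite_range u₀
    exact lt_of_lt_of_le (Cardinal.lt_aleph0_of_finite _) (Cardinal.aleph0_le_mk Q)
  obtain ⟨g, hg⟩ := Cardinal.extend_function_of_lt f hs ⟨Equiv.refl Q⟩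
  refine ⟨g, fun j => ?_⟩
  have := hg ⟨u₀ j, Set.mem_range_self j⟩
  rw [this]
  exact congrArg u ((Equiv.ofInjective u₀ h₀).symm_apply_apply j)

/-- If a permutation-invariant relation `φ ⊆ Qⁿ` on an infinite set contains all constant
tuples but is not full, then some identification of variables (a surjection `c` onto `r ≥ 2`
classes) yields exactly the relation "some two coordinates are equal". -/
theorem stmt_11 (Q : Type*) [Infinite Q] (n : ℕ) (hn : 2 ≤ n) (φ : Set (Fin n → Q))
    (hinv : ∀ σ : Equiv.Perm Q, ∀ v ∈ φ, (fun i => σ (v i)) ∈ φ)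
    (hdiag : ∀ x : Q, (fun _ => x) ∈ φ) (hproper : φ ≠ Set.univ) :
    ∃ (r : ℕ), 2 ≤ r ∧ ∃ c : Fin n → Fin r, Function.Surjective c ∧
      {u : Fin r → Q | (fun i => u (c i)) ∈ φ} =
        {u : Fin r → Q | ∃ i j : Fin r, i ≠ j ∧ u i = u j} := by
  classical
  -- general fact: if v ∉ φ then its number of distinct values is ≥ 2, and we get a witness
  have key : ∀ v : Fin n → Q, v ∉ φ →
      2 ≤ (Finset.univ.image v).card ∧
      ∃ c : Fin n → Fin (Finset.univ.image v).card,
        Function.Surjective c ∧ ∃ u, Function.Injective u ∧ (u ∘ c) ∉ φ := by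
    intro v hv
    obtain ⟨c, u, hc, hu, hfac⟩ := stmt_11_factor v
    have hn0 : 0 < n := Nat.lt_of_lt_of_le Nat.zero_lt_two hn
    have hpos : 0 < (Finset.univ.image v).card :=
      Finset.card_pos.mpr ⟨v ⟨0, hn0⟩, Finset.mem_image_of_mem _ (Finset.mem_univ _)⟩
    have h2 : 2 ≤ (Finset.univ.image v).card := by
      by_contra h
      have h1 : (Finset.univ.image v).card = 1 := by omega
      obtain ⟨a, ha⟩ := Finset.card_eq_one.mp h1
      have hconst : ∀ i, v i = a := by
        intro i
        have := Finset.mem_image_of_mem v (Finset.mem_univ i)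
        rw [ha, Finset.mem_singleton] at this
        exact this
      have hva : v = fun _ => a := funext hconst
      exact hv (hva ▸ hdiag a)
    exact ⟨h2, c, hc, u, hu, by rwa [hfac]⟩
  -- the predicate: r admits a falsifying identification
  have hpred : ∃ r, 2 ≤ r ∧ ∃ c : Fin n → Fin r, Function.Surjective c ∧
      ∃ u, Function.Injective u ∧ (u ∘ c) ∉ φ := by
    obtain ⟨w, hw⟩ := (Set.ne_univ_iff_exists_notMem φ).mp hproper
    obtain ⟨h2, c, hc, u, hu, hcu⟩ := key w hw
    exact ⟨_, h2, c, hc, u, hu, hcu⟩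
  set P : ℕ → Prop := fun r => 2 ≤ r ∧ ∃ c : Fin n → Fin r, Function.Surjective c ∧
      ∃ u, Function.Injective u ∧ (u ∘ c) ∉ φ with hP
  have hex : ∃ r, P r := hpred
  set r := Nat.find hex with hr
  obtain ⟨hr2, c, hc, u₀, hu₀, hu₀c⟩ := Nat.find_spec hex
  refine ⟨r, hr2, c, hc, ?_⟩
  ext u
  simp only [Set.mem_setOf_eq]
  constructor
  · -- if u ∘ c ∈ φ, then u has a repeated coordinate
    intro hmem
    by_contra hrep
    push_neg at hrep
    have hu : Function.Injective u := by
      intro i j hij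
      by_contra hne
      exact (hrep i j hne) hij
    obtain ⟨σ, hσ⟩ := stmt_11_perm hu hu₀
    have := hinv σ _ hmem
    have heq : (fun i => σ (u (c i))) = u₀ ∘ c := funext fun i => hσ (c i)
    rw [heq] at this
    exact hu₀c this
  · -- if u has a repeated coordinate, then u ∘ c ∈ φ
    rintro ⟨i, j, hij, hval⟩
    by_contra hmem
    -- factor v := u ∘ c through its image; fewer than r classes
    set v : Fin n → Q := fun i => u (c i) with hv
    have hvφ : v ∉ φ := hmem
    obtain ⟨h2, c', hc', u', hu', hc'u'⟩ := key v hvφ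
    -- image of v = image of u, which has < r elements
    have himg : Finset.univ.image v = Finset.univ.image u := by
      have : Finset.univ.image v = (Finset.univ.image c).image u := by
        rw [Finset.image_image]; rfl
      rw [this, Finset.image_univ_of_surjective hc]
    have hlt : (Finset.univ.image v).card < r := by
      rw [himg]
      have hsub : Finset.univ.image u ⊆ (Finset.univ.erase i).image u := by
        intro x hx
        obtain ⟨k, -, hk⟩ := Finset.mem_image.mp hx
        by_cases hki : k = i
        · exact Finset.mem_image.mpr ⟨j, Finset.mem_erase.mpr ⟨Ne.symm hij, Finset.mem_univ j⟩, by rw [← hval, ← hki, hk]⟩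
        · exact Finset.mem_image.mpr ⟨k, Finset.mem_erase.mpr ⟨hki, Finset.mem_univ k⟩, hk⟩
      calc (Finset.univ.image u).card ≤ ((Finset.univ.erase i).image u).card :=
            Finset.card_le_card hsub
        _ ≤ (Finset.univ.erase i).card := Finset.card_image_le
        _ < Finset.univ.card := Finset.card_erase_lt_of_mem (Finset.mem_univ i)
        _ = r := Finset.card_univ.trans (Fintype.card_fin r)
    -- contradiction with minimality of r
    have : P (Finset.univ.image v).card := ⟨h2, c', hc', u', hu', hc'u'⟩
    exact absurd this (Nat.find_min hex hlt)
end

section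
/- Let Q be an infinite set and n ≥ 2, and let φ ⊆ Qⁿ be invariant under all permutations of Q. Suppose the constant tuple (x,…,x) is not in φ for any x, but some tuple lies in φ. Then there exist r ≥ 2 and a surjective map c : {1,…,n} → {1,…,r} such that the relation R(u₁,…,u_r) := ((u_{c(1)},…,u_{c(n)}) ∈ φ) equals {(u₁,…,u_r) : uᵢ ≠ u_j for all i ≠ j}. -/
/-- If a permutation-invariant nonempty relation `φ ⊆ Qⁿ` on an infinite set contains no
constant tuple, then some identification of variables (a surjection `c` onto `r ≥ 2` classes)
yields exactly the all-distinct relation. -/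
theorem stmt_16 (Q : Type*) [Infinite Q] (n : ℕ) (hn : 2 ≤ n) (φ : Set (Fin n → Q))
    (hinv : ∀ σ : Equiv.Perm Q, ∀ v ∈ φ, (fun i => σ (v i)) ∈ φ)
    (hdiag : ∀ x : Q, (fun _ => x) ∉ φ) (hne : φ.Nonempty) :
    ∃ (r : ℕ), 2 ≤ r ∧ ∃ c : Fin n → Fin r, Function.Surjective c ∧
      {u : Fin r → Q | (fun i => u (c i)) ∈ φ} =
        {u : Fin r → Q | ∀ i j : Fin r, i ≠ j → u i ≠ u j} := by
  classical
  set m : (Fin n → Q) → ℕ := fun v => (Finset.univ.image v).card with hm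
  -- minimal number of distinct values over φ
  obtain ⟨v, hv⟩ := hne
  set r : ℕ := sInf (m '' φ) with hr
  have hmem : r ∈ m '' φ := Nat.sInf_mem ⟨m v, v, hv, rfl⟩
  obtain ⟨w, hw, hwr⟩ := hmem
  have hmin : ∀ z ∈ φ, r ≤ m z := fun z hz => Nat.sInf_le ⟨z, hz, rfl⟩
  set s : Finset Q := Finset.univ.image w with hs
  have hscard : s.card = r := hwr
  have hws : ∀ i, w i ∈ s := fun i => Finset.mem_image.2 ⟨i, Finset.mem_univ i, rfl⟩
  set c : Fin n → Fin r := fun i => Fin.cast hscard (s.equivFin ⟨w i, hws i⟩) with hc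
  have hcw : ∀ i j, c i = c j ↔ w i = w j := by
    intro i j
    constructor
    · intro h
      have := Fin.cast_injective hscard h
      have := s.equivFin.injective this
      exact congrArg Subtype.val this
    · intro h
      simp only [hc]
      have : (⟨w i, hws i⟩ : s) = ⟨w j, hws j⟩ := Subtype.ext h
      rw [this]
  have hcsurj : Function.Surjective c := by
    intro k
    obtain ⟨x, hx⟩ := s.equivFin.surjective (Fin.cast hscard.symm k)
    obtain ⟨i, _, hi⟩ := Finset.mem_image.1 x.2
    refine ⟨i, ?_⟩
    simp only [hc]
    have : (⟨w i, hws i⟩ : s) = x := Subtype.ext hi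
    rw [this, hx]
    ext; simp
  -- r ≥ 2
  have hr1 : 1 ≤ r := by
    rw [← hscard]
    refine Finset.card_pos.2 ⟨w ⟨0, by omega⟩, hws _⟩
  have hr2 : 2 ≤ r := by
    rcases Nat.lt_or_ge r 2 with h | h
    · exfalso
      interval_cases r
      · obtain ⟨x, hx⟩ := Finset.card_eq_one.1 hscard
        have hwconst : ∀ i, w i = x := fun i => by
          have := hws i; rw [hx] at this; simpa using this
        have : w = fun _ => x := funext hwconst
        exact hdiag x (this ▸ hw)
    · exact h
  refine ⟨r, hr2, c, hcsurj, ?_⟩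
  ext u
  simp only [Set.mem_setOf_eq]
  constructor
  · -- forward: membership implies all-distinct
    intro hu i j hij
    intro heq
    -- then u ∘ c has fewer than r distinct values
    have himg : Finset.univ.image (fun k => u (c k)) ⊆ (Finset.univ.erase i).image u := by
      intro x hx
      obtain ⟨k, _, hk⟩ := Finset.mem_image.1 hx
      by_cases hci : c k = i
      · refine Finset.mem_image.2 ⟨j, ?_, ?_⟩
        · exact Finset.mem_erase.2 ⟨(Ne.symm hij), Finset.mem_univ j⟩
        · rw [← hk, hci, heq]
      · exact Finset.mem_image.2 ⟨c k, Finset.mem_erase.2 ⟨hci, Finset.mem_univ _⟩, hk⟩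
    have hlt : m (fun k => u (c k)) < r := by
      calc m (fun k => u (c k)) ≤ ((Finset.univ.erase i).image u).card :=
            Finset.card_le_card himg
        _ ≤ (Finset.univ.erase i).card := Finset.card_image_le
        _ = r - 1 := by rw [Finset.card_erase_of_mem (Finset.mem_univ i), Finset.card_univ,
            Fintype.card_fin]
        _ < r := by omega
    exact absurd (hmin _ hu) (not_le.2 hlt)
  · -- backward: all-distinct implies membership
    intro hu
    have huinj : Function.Injective u := by
      intro a b hab
      by_contra h
      exact hu a b h hab
    -- injection from s to Q sending w i to u (c i)
    set f : (↑(s : Set Q)) → Q := fun x => u (Fin.cast hscard (s.equivFin ⟨x.1, x.2⟩)) with hf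
    have hfinj : Function.Injective f := by
      intro a b hab
      have := huinj hab
      have := Fin.cast_injective hscard this
      have := s.equivFin.injective this
      exact Subtype.ext (congrArg Subtype.val (by exact_mod_cast this))
    have hslt : Cardinal.mk (↑(s : Set Q)) < Cardinal.mk Q := by
      exact lt_of_lt_of_le (Cardinal.lt_aleph0_of_finite _)
        (Cardinal.aleph0_le_mk Q)
    obtain ⟨g, hg⟩ := Cardinal.extend_function_of_lt ⟨f, hfinj⟩ hslt ⟨Equiv.refl Q⟩
    have := hinv g w hw
    have heq : (fun i => g (w i)) = (fun i => u (c i)) := by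
      funext i
      have := hg ⟨w i, by exact_mod_cast hws i⟩
      simpa [hf, hc] using this
    rwa [heq] at this
end
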